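/- arXiv:2306.03345 — 8 statements merged into one kernel-verified Lean document; each statement's English description precedes it below -/
import Mathlib

section
/- Let G be an m×m symmetric positive definite real matrix, A a p×m real matrix, B an n×q real matrix, C a p×q real matrix, S a p×τ₁ real matrix and P a q×τ₂ real matrix such that SᵀAG⁻¹AᵀS and PᵀBᵀBP are invertible. For any m×n real matrix X define X⁺ = X − G⁻¹AᵀS(SᵀAG⁻¹AᵀS)⁻¹Sᵀ(AXB − C)P(PᵀBᵀBP)⁻¹PᵀBᵀ. Then SᵀAX⁺BP = SᵀCP, i.e. the updated iterate solves the sketched equation. -/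
/-!
`G⁻¹AᵀS(SᵀAG⁻¹AᵀS)⁻¹` is a right inverse of `SᵀA` and `(PᵀBᵀBP)⁻¹PᵀBᵀ` a left inverse of `BP`,
so sketching the correction term returns exactly the sketched residual `Sᵀ(AXB - C)P`;
subtracting it from `SᵀAXBP` leaves `SᵀCP`.
-/

open Matrix

namespace Matrix

variable {α : Type*} [CommRing α] {k l m n : Type*}
  [Fintype k] [DecidableEq k] [Fintype l] [DecidableEq l] [Fintype m] [Fintype n]

theorem mul_mul_nonsing_inv_mul_self (K : Matrix k m α) (Y : Matrix m k α)
    (h : IsUnit (K * Y).det) : K * (Y * (K * Y)⁻¹) = 1 := by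
  rw [← Matrix.mul_assoc]
  exact mul_nonsing_inv _ h

theorem nonsing_inv_mul_self_mul_mul (Z : Matrix l n α) (L : Matrix n l α)
    (h : IsUnit (Z * L).det) : (Z * L)⁻¹ * Z * L = 1 := by
  rw [Matrix.mul_assoc]
  exact nonsing_inv_mul _ h

theorem mul_sub_mul_mul_mul_eq {K : Matrix k m α} {M : Matrix m k α}
    {N : Matrix l n α} {L : Matrix n l α} (hKM : K * M = 1) (hNL : N * L = 1)
    (X : Matrix m n α) (E : Matrix k l α) :
    K * (X - M * E * N) * L = K * X * L - E := by
  have hcorr : K * (M * E * N) * L = (K * M) * E * (N * L) := by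
    simp only [Matrix.mul_assoc]
  rw [Matrix.mul_sub, Matrix.sub_mul, hcorr, hKM, hNL, Matrix.one_mul, Matrix.mul_one]

end Matrix

theorem stmt_0_general {m n p q τ₁ τ₂ : ℕ}
    (G : Matrix (Fin m) (Fin m) ℝ)
    (A : Matrix (Fin p) (Fin m) ℝ) (B : Matrix (Fin n) (Fin q) ℝ)
    (C : Matrix (Fin p) (Fin q) ℝ)
    (S : Matrix (Fin p) (Fin τ₁) ℝ) (P : Matrix (Fin q) (Fin τ₂) ℝ)
    (hS : IsUnit (Sᵀ * A * G⁻¹ * Aᵀ * S).det)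
    (hP : IsUnit (Pᵀ * Bᵀ * B * P).det)
    (X : Matrix (Fin m) (Fin n) ℝ) :
    Sᵀ * A * (X - G⁻¹ * Aᵀ * S * (Sᵀ * A * G⁻¹ * Aᵀ * S)⁻¹ * Sᵀ *
        (A * X * B - C) * P * (Pᵀ * Bᵀ * B * P)⁻¹ * Pᵀ * Bᵀ) * B * P
      = Sᵀ * C * P := by
  have hright : Sᵀ * A * (G⁻¹ * Aᵀ * S * (Sᵀ * A * G⁻¹ * Aᵀ * S)⁻¹) = 1 := by
    simpa only [Matrix.mul_assoc] using
      mul_mul_nonsing_inv_mul_self (Sᵀ * A) (G⁻¹ * Aᵀ * S)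
        (by simpa only [Matrix.mul_assoc] using hS)
  have hleft : (Pᵀ * Bᵀ * B * P)⁻¹ * (Pᵀ * Bᵀ) * (B * P) = 1 := by
    simpa only [Matrix.mul_assoc] using
      nonsing_inv_mul_self_mul_mul (Pᵀ * Bᵀ) (B * P)
        (by simpa only [Matrix.mul_assoc] using hP)
  have hupdate := mul_sub_mul_mul_mul_eq hright hleft X (Sᵀ * (A * X * B - C) * P)
  calc _ = Sᵀ * A * X * (B * P) - Sᵀ * (A * X * B - C) * P := by
        rw [← hupdate]; simp only [Matrix.mul_assoc]
    _ = Sᵀ * C * P := by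
        simp only [Matrix.mul_sub, Matrix.sub_mul, Matrix.mul_assoc, sub_sub_cancel]

/-- the sketch-and-project update solves the sketched equation
`Sᵀ A X⁺ B P = Sᵀ C P`. -/
theorem stmt_0 {m n p q τ₁ τ₂ : ℕ}
    (G : Matrix (Fin m) (Fin m) ℝ) (hG : G.PosDef)
    (A : Matrix (Fin p) (Fin m) ℝ) (B : Matrix (Fin n) (Fin q) ℝ)
    (C : Matrix (Fin p) (Fin q) ℝ)
    (S : Matrix (Fin p) (Fin τ₁) ℝ) (P : Matrix (Fin q) (Fin τ₂) ℝ)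
    (hS : IsUnit (Sᵀ * A * G⁻¹ * Aᵀ * S).det)
    (hP : IsUnit (Pᵀ * Bᵀ * B * P).det)
    (X : Matrix (Fin m) (Fin n) ℝ) :
    Sᵀ * A * (X - G⁻¹ * Aᵀ * S * (Sᵀ * A * G⁻¹ * Aᵀ * S)⁻¹ * Sᵀ *
        (A * X * B - C) * P * (Pᵀ * Bᵀ * B * P)⁻¹ * Pᵀ * Bᵀ) * B * P
      = Sᵀ * C * P :=
  stmt_0_general G A B C S P hS hP X
end

section
/- Let G be an m×m symmetric positive definite real matrix, A a p×m real matrix, B an n×q real matrix, C a p×q real matrix, S a p×τ₁ real matrix and P a q×τ₂ real matrix such that SᵀAG⁻¹AᵀS and PᵀBᵀBP are invertible. Fix an m×n real matrix Xᵏ and define X⁺ = Xᵏ − G⁻¹AᵀS(SᵀAG⁻¹AᵀS)⁻¹Sᵀ(AXᵏB − C)P(PᵀBᵀBP)⁻¹PᵀBᵀ. Then for every m×n real matrix W satisfying SᵀAWBP = SᵀCP one has ‖X⁺ − Xᵏ‖_{F(G)} ≤ ‖W − Xᵏ‖_{F(G)}; that is, X⁺ minimizes the G-weighted Frobenius distance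 to Xᵏ over the solution set of the sketched equation. -/
open Matrix

/-- The `G`-weighted Frobenius norm `‖M‖_{F(G)} = √(Tr(Mᵀ G M))`. -/
noncomputable def normFG {m n : ℕ} (G : Matrix (Fin m) (Fin m) ℝ)
    (M : Matrix (Fin m) (Fin n) ℝ) : ℝ :=
  Real.sqrt (Matrix.trace (Mᵀ * G * M))

/-!
The update is `X⁺ = Xᵏ + L (W - Xᵏ) R` for any solution `W` of the sketched equation, where
`L = G⁻¹ M̃ᵀ (M̃ G⁻¹ M̃ᵀ)⁻¹ M̃` with `M̃ = SᵀA` is the `G`-orthogonal projector onto the row space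
of `SᵀA`, and `R = N (NᵀN)⁻¹ Nᵀ` with `N = BP` is the orthogonal projector onto the column space of
`BP`. Hence `X ↦ L X R` is an orthogonal projection for the inner product `⟨X, Y⟩ = Tr(Xᵀ G Y)`,
and Pythagoras gives `‖X⁺ - Xᵏ‖_{F(G)} ≤ ‖W - Xᵏ‖_{F(G)}`.
-/

namespace Matrix

section weightedProj

variable {α ι κ : Type*} [CommRing α] [Fintype ι] [DecidableEq ι] [Fintype κ] [DecidableEq κ]

noncomputable def weightedProj (G : Matrix ι ι α) (M : Matrix κ ι α) : Matrix ι ι α :=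
  G⁻¹ * Mᵀ * (M * G⁻¹ * Mᵀ)⁻¹ * M

theorem weightedProj_mul_self {G : Matrix ι ι α} {M : Matrix κ ι α}
    (hK : IsUnit (M * G⁻¹ * Mᵀ).det) :
    weightedProj G M * weightedProj G M = weightedProj G M := by
  have hKK : (M * G⁻¹ * Mᵀ)⁻¹ * (M * G⁻¹ * Mᵀ) = 1 := nonsing_inv_mul _ hK
  calc weightedProj G M * weightedProj G M
      = G⁻¹ * Mᵀ * ((M * G⁻¹ * Mᵀ)⁻¹ * (M * G⁻¹ * Mᵀ)) * (M * G⁻¹ * Mᵀ)⁻¹ * M := by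
        simp only [weightedProj, Matrix.mul_assoc]
    _ = weightedProj G M := by rw [hKK, Matrix.mul_one, weightedProj]

theorem transpose_mul_weightedProj {G : Matrix ι ι α} (hG : Gᵀ = G) (hGu : IsUnit G.det)
    (M : Matrix κ ι α) : (G * weightedProj G M)ᵀ = G * weightedProj G M := by
  have hGL : G * weightedProj G M = Mᵀ * (M * G⁻¹ * Mᵀ)⁻¹ * M := by
    simp only [weightedProj, ← Matrix.mul_assoc, mul_nonsing_inv _ hGu, Matrix.one_mul]
  rw [hGL]
  simp only [transpose_mul, transpose_transpose, transpose_nonsing_inv, hG, Matrix.mul_assoc]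

end weightedProj

/-- If `L` is a `G`-orthogonal projector and `R` an orthogonal projector, then `E - L E R` is
`G`-orthogonal to `L E R`. -/
theorem trace_proj_sandwich_eq {α ι ι' : Type*} [CommRing α] [Fintype ι] [Fintype ι']
    {G L : Matrix ι ι α} {R : Matrix ι' ι' α}
    (hG : Gᵀ = G) (hLL : L * L = L) (hGL : (G * L)ᵀ = G * L) (hRR : R * R = R) (hR : Rᵀ = R)
    (E : Matrix ι ι' α) :
    ((L * E * R)ᵀ * G * (L * E * R)).trace = (Eᵀ * G * (L * E * R)).trace := by
  have hLGL : Lᵀ * G * L = G * L := by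
    rw [← hG, ← transpose_mul, hG, hGL, Matrix.mul_assoc, hLL]
  calc ((L * E * R)ᵀ * G * (L * E * R)).trace
      = (R * (Eᵀ * (Lᵀ * G * L) * E * R)).trace := by
        simp only [transpose_mul, hR, Matrix.mul_assoc]
    _ = (Eᵀ * (G * L) * E * (R * R)).trace := by
        rw [trace_mul_comm, hLGL]; simp only [Matrix.mul_assoc]
    _ = (Eᵀ * G * (L * E * R)).trace := by rw [hRR]; simp only [Matrix.mul_assoc]

end Matrix

theorem normFG_le_of_trace_eq {m n : ℕ} {G : Matrix (Fin m) (Fin m) ℝ} (hG : G.PosSemidef)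
    {D E : Matrix (Fin m) (Fin n) ℝ} (h : (Dᵀ * G * D).trace = (Eᵀ * G * D).trace) :
    normFG G D ≤ normFG G E := by
  have hGt : Gᵀ = G := hG.isHermitian.eq
  have hcross : (Dᵀ * G * E).trace = (Eᵀ * G * D).trace := by
    rw [← trace_transpose]; simp only [transpose_mul, transpose_transpose, hGt, Matrix.mul_assoc]
  have hnonneg : 0 ≤ ((E - D)ᵀ * G * (E - D)).trace := by
    simpa using (hG.conjTranspose_mul_mul_same (E - D)).trace_nonneg
  have hexpand : ((E - D)ᵀ * G * (E - D)).trace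
      = (Eᵀ * G * E).trace - (Eᵀ * G * D).trace - (Dᵀ * G * E).trace + (Dᵀ * G * D).trace := by
    simp only [transpose_sub, Matrix.sub_mul, Matrix.mul_sub, trace_sub]; ring
  exact Real.sqrt_le_sqrt (by linarith)

theorem sketchProject_sub_eq {m n p q τ₁ τ₂ : ℕ} (G : Matrix (Fin m) (Fin m) ℝ)
    (A : Matrix (Fin p) (Fin m) ℝ) (B : Matrix (Fin n) (Fin q) ℝ) (C : Matrix (Fin p) (Fin q) ℝ)
    (S : Matrix (Fin p) (Fin τ₁) ℝ) (P : Matrix (Fin q) (Fin τ₂) ℝ)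
    (Xk W : Matrix (Fin m) (Fin n) ℝ) (hW : Sᵀ * A * W * B * P = Sᵀ * C * P) :
    (Xk - G⁻¹ * Aᵀ * S * (Sᵀ * A * G⁻¹ * Aᵀ * S)⁻¹ * Sᵀ *
        (A * Xk * B - C) * P * (Pᵀ * Bᵀ * B * P)⁻¹ * Pᵀ * Bᵀ) - Xk
      = weightedProj G (Sᵀ * A) * (W - Xk) * weightedProj 1 (B * P)ᵀ := by
  have hres : Sᵀ * (A * Xk * B - C) * P = -(Sᵀ * A * (W - Xk) * B * P) := by
    simp only [Matrix.mul_sub, Matrix.sub_mul, hW]; simp only [Matrix.mul_assoc]; abel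
  calc (Xk - G⁻¹ * Aᵀ * S * (Sᵀ * A * G⁻¹ * Aᵀ * S)⁻¹ * Sᵀ *
        (A * Xk * B - C) * P * (Pᵀ * Bᵀ * B * P)⁻¹ * Pᵀ * Bᵀ) - Xk
      = -(G⁻¹ * Aᵀ * S * (Sᵀ * A * G⁻¹ * Aᵀ * S)⁻¹ * (Sᵀ * (A * Xk * B - C) * P) *
          (Pᵀ * Bᵀ * B * P)⁻¹ * Pᵀ * Bᵀ) := by simp only [Matrix.mul_assoc]; abel
    _ = _ := by
        rw [hres]
        simp [weightedProj, transpose_mul, Matrix.mul_assoc]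

/-- the sketch-and-project update is the closest point to `Xᵏ`
(in the `G`-weighted Frobenius norm) among all solutions of the sketched equation. -/
theorem stmt_1 {m n p q τ₁ τ₂ : ℕ}
    (G : Matrix (Fin m) (Fin m) ℝ) (hG : G.PosDef)
    (A : Matrix (Fin p) (Fin m) ℝ) (B : Matrix (Fin n) (Fin q) ℝ)
    (C : Matrix (Fin p) (Fin q) ℝ)
    (S : Matrix (Fin p) (Fin τ₁) ℝ) (P : Matrix (Fin q) (Fin τ₂) ℝ)
    (hS : IsUnit (Sᵀ * A * G⁻¹ * Aᵀ * S).det)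
    (hP : IsUnit (Pᵀ * Bᵀ * B * P).det)
    (Xk : Matrix (Fin m) (Fin n) ℝ)
    (W : Matrix (Fin m) (Fin n) ℝ)
    (hW : Sᵀ * A * W * B * P = Sᵀ * C * P) :
    normFG G ((Xk - G⁻¹ * Aᵀ * S * (Sᵀ * A * G⁻¹ * Aᵀ * S)⁻¹ * Sᵀ *
        (A * Xk * B - C) * P * (Pᵀ * Bᵀ * B * P)⁻¹ * Pᵀ * Bᵀ) - Xk)
      ≤ normFG G (W - Xk) := by
  have hGt : Gᵀ = G := hG.isHermitian.eq
  have hL : IsUnit ((Sᵀ * A) * G⁻¹ * (Sᵀ * A)ᵀ).det := by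
    simpa only [transpose_mul, transpose_transpose, Matrix.mul_assoc] using hS
  have hR : IsUnit ((B * P)ᵀ * (1 : Matrix (Fin n) (Fin n) ℝ)⁻¹ * (B * P)ᵀᵀ).det := by
    simpa only [transpose_mul, transpose_transpose, inv_one, Matrix.mul_one, Matrix.mul_assoc]
      using hP
  have hRt : (weightedProj 1 (B * P)ᵀ)ᵀ = weightedProj 1 (B * P)ᵀ := by
    simpa using transpose_mul_weightedProj transpose_one (by simp) (B * P)ᵀ
  rw [sketchProject_sub_eq G A B C S P Xk W hW]
  exact normFG_le_of_trace_eq hG.posSemidef <| trace_proj_sandwich_eq hGt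
    (weightedProj_mul_self hL) (transpose_mul_weightedProj hGt hG.det_pos.ne'.isUnit _)
    (weightedProj_mul_self hR) hRt _
end

section
/- Let G be an m×m symmetric positive definite real matrix, A a p×m real matrix, B an n×q real matrix, S a p×τ₁ real matrix and P a q×τ₂ real matrix such that SᵀAG⁻¹AᵀS and PᵀBᵀBP are invertible. Define Z₁' = G⁻¹AᵀS(SᵀAG⁻¹AᵀS)⁻¹SᵀA and Z₂ = BP(PᵀBᵀBP)⁻¹PᵀBᵀ. Let X and X* be m×n real matrices and set X⁺ = X − Z₁'(X − X*)Z₂. Then ‖X⁺ − X*‖²_{F(G)} = ‖X − X*‖²_{F(G)} − ‖Z₁'(X − X*)Z₂‖²_{F(G)}. -/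
open Matrix

/-!
With `E = X − X*` and `W = Z₁' E Z₂`, the update error is `X⁺ − X* = E − W`. The map
`E ↦ Z₁' E Z₂` is an orthogonal projection for the inner product `⟨M, N⟩ = Tr(Mᵀ G N)`:
`Z₁'` is idempotent and `G Z₁' = AᵀS (SᵀAG⁻¹AᵀS)⁻¹ SᵀA` is symmetric, while `Z₂` is a
symmetric idempotent. Hence `E − W ⟂ W`, and the identity is Pythagoras' theorem.
-/

namespace Matrix

variable {ι κ n R : Type*}

theorem IsSymm.mul_mul_transpose [Fintype κ] [CommSemiring R] {M : Matrix κ κ R} (hM : M.IsSymm)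
    (C : Matrix ι κ R) : (C * M * Cᵀ).IsSymm := by
  simp only [IsSymm, transpose_mul, transpose_transpose, hM.eq, Matrix.mul_assoc]

theorem isIdempotentElem_mul_inv_mul [Fintype ι] [Fintype κ] [DecidableEq ι] [DecidableEq κ]
    [CommRing R] {U : Matrix ι κ R} {V : Matrix κ ι R} (h : IsUnit (V * U).det) :
    IsIdempotentElem (U * (V * U)⁻¹ * V) := by
  calc U * (V * U)⁻¹ * V * (U * (V * U)⁻¹ * V)
      = U * ((V * U)⁻¹ * (V * U) * (V * U)⁻¹) * V := by simp only [Matrix.mul_assoc]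
    _ = U * (V * U)⁻¹ * V := by rw [nonsing_inv_mul _ h, Matrix.one_mul]

theorem trace_transpose_mul_mul_sub_of_orthogonal [Fintype ι] [Fintype n] [CommRing R]
    {G : Matrix ι ι R} (hG : G.IsSymm) {E W : Matrix ι n R}
    (horth : trace (Wᵀ * G * E) = trace (Wᵀ * G * W)) :
    trace ((E - W)ᵀ * G * (E - W)) = trace (Eᵀ * G * E) - trace (Wᵀ * G * W) := by
  have hsymm : trace (Eᵀ * G * W) = trace (Wᵀ * G * E) := by
    rw [← trace_transpose]
    simp only [transpose_mul, transpose_transpose, hG.eq, Matrix.mul_assoc]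
  simp only [transpose_sub, Matrix.sub_mul, Matrix.mul_sub, trace_sub]
  rw [hsymm, horth]
  ring

theorem trace_transpose_mul_mul_projection [Fintype ι] [Fintype n] [CommRing R]
    {G Z₁ : Matrix ι ι R} {Z₂ : Matrix n n R} (hG : G.IsSymm) (hGZ₁ : (G * Z₁).IsSymm)
    (hZ₁ : IsIdempotentElem Z₁) (hZ₂ : Z₂.IsSymm) (hZ₂' : IsIdempotentElem Z₂) (E : Matrix ι n R) :
    trace ((Z₁ * E * Z₂)ᵀ * G * E) = trace ((Z₁ * E * Z₂)ᵀ * G * (Z₁ * E * Z₂)) := by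
  have hZ₁G (M : Matrix ι n R) : Z₁ᵀ * (G * M) = G * (Z₁ * M) := by
    rw [← Matrix.mul_assoc, ← Matrix.mul_assoc, ← hGZ₁.eq, transpose_mul, hG.eq]
  have hleft : (Z₁ * E * Z₂)ᵀ * G * E = Z₂ * (Eᵀ * G * Z₁ * E) := by
    simp only [transpose_mul, hZ₂.eq, Matrix.mul_assoc, hZ₁G]
  have hright : (Z₁ * E * Z₂)ᵀ * G * (Z₁ * E * Z₂) = Z₂ * (Eᵀ * G * Z₁ * E) * Z₂ := by
    calc (Z₁ * E * Z₂)ᵀ * G * (Z₁ * E * Z₂) = Z₂ * Eᵀ * G * (Z₁ * Z₁) * E * Z₂ := by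
          simp only [transpose_mul, hZ₂.eq, Matrix.mul_assoc, hZ₁G]
      _ = Z₂ * (Eᵀ * G * Z₁ * E) * Z₂ := by rw [hZ₁.eq]; simp only [Matrix.mul_assoc]
  rw [hleft, hright, trace_mul_comm _ Z₂, ← Matrix.mul_assoc Z₂ Z₂, hZ₂'.eq]

end Matrix

/-- Pythagorean identity for the sketch-and-project update:
`‖X⁺ − X*‖²_{F(G)} = ‖X − X*‖²_{F(G)} − ‖Z₁'(X − X*)Z₂‖²_{F(G)}`,
where `‖M‖²_{F(G)} = Tr(Mᵀ G M)`. -/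
theorem stmt_4 {m n p q τ₁ τ₂ : ℕ}
    (G : Matrix (Fin m) (Fin m) ℝ) (hG : G.PosDef)
    (A : Matrix (Fin p) (Fin m) ℝ) (B : Matrix (Fin n) (Fin q) ℝ)
    (S : Matrix (Fin p) (Fin τ₁) ℝ) (P : Matrix (Fin q) (Fin τ₂) ℝ)
    (hS : IsUnit (Sᵀ * A * G⁻¹ * Aᵀ * S).det)
    (hP : IsUnit (Pᵀ * Bᵀ * B * P).det)
    (X Xs : Matrix (Fin m) (Fin n) ℝ) :
    let Z₁' : Matrix (Fin m) (Fin m) ℝ :=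
      G⁻¹ * Aᵀ * S * (Sᵀ * A * G⁻¹ * Aᵀ * S)⁻¹ * Sᵀ * A
    let Z₂ : Matrix (Fin n) (Fin n) ℝ :=
      B * P * (Pᵀ * Bᵀ * B * P)⁻¹ * Pᵀ * Bᵀ
    let Xp : Matrix (Fin m) (Fin n) ℝ := X - Z₁' * (X - Xs) * Z₂
    Matrix.trace ((Xp - Xs)ᵀ * G * (Xp - Xs))
      = Matrix.trace ((X - Xs)ᵀ * G * (X - Xs))
        - Matrix.trace ((Z₁' * (X - Xs) * Z₂)ᵀ * G * (Z₁' * (X - Xs) * Z₂)) := by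
  intro Z₁' Z₂ Xp
  have hGsymm : G.IsSymm := hG.isHermitian
  have hGinv : G * G⁻¹ = 1 := mul_nonsing_inv G (isUnit_iff_ne_zero.mpr hG.det_pos.ne')
  have hZ₁ : IsIdempotentElem Z₁' := by
    simpa only [Z₁', Matrix.mul_assoc] using
      isIdempotentElem_mul_inv_mul (U := G⁻¹ * Aᵀ * S) (V := Sᵀ * A)
        (by simpa only [Matrix.mul_assoc] using hS)
  have hGZ₁ : (G * Z₁').IsSymm := by
    simpa only [Z₁', transpose_mul, transpose_transpose, ← Matrix.mul_assoc, hGinv,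
      Matrix.one_mul] using
      (hGsymm.inv.mul_mul_transpose (Sᵀ * A)).inv.mul_mul_transpose (Aᵀ * S)
  have hZ₂ : IsIdempotentElem Z₂ := by
    simpa only [Z₂, Matrix.mul_assoc] using
      isIdempotentElem_mul_inv_mul (U := B * P) (V := Pᵀ * Bᵀ)
        (by simpa only [Matrix.mul_assoc] using hP)
  have hZ₂symm : Z₂.IsSymm := by
    simpa only [Z₂, transpose_mul, transpose_transpose, Matrix.mul_one, ← Matrix.mul_assoc] using
      (isSymm_one.mul_mul_transpose (B * P)ᵀ).inv.mul_mul_transpose (B * P)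
  have hXp : Xp - Xs = (X - Xs) - Z₁' * (X - Xs) * Z₂ := by
    simp only [Xp]; abel
  rw [hXp]
  exact trace_transpose_mul_mul_sub_of_orthogonal hGsymm
    (trace_transpose_mul_mul_projection hGsymm hGZ₁ hZ₁ hZ₂symm hZ₂ (X - Xs))
end

section
/- In the setting of a finite discrete sampling: let G be an m×m symmetric positive definite real matrix with positive definite square root G^{1/2}, A a p×m real matrix, B an n×q real matrix, and for each k in a finite index set let S_k be a p×τ₁(k) real matrix and P_k a q×τ₂(k) real matrix such that S_kᵀAG⁻¹AᵀS_k and P_kᵀBᵀBP_k are invertible, with weights p_k ≥ 0 summing to 1. Define Ẑ₁ᵏ = G^{-1/2}AᵀS_k(S_kᵀAG⁻¹AᵀS_k)⁻¹S_kᵀAG^{-1/2}, Z₂ᵏ = BP_k(P_kᵀBᵀBP_k)⁻¹P_kᵀBᵀ, and M = Σ_k p_k (Z₂ᵏ ⊗ Ẑ₁ᵏ). Then λ_min(M) ≤ (Σ_k p_k·τ₁(k)·τ₂(k))/(mn); equivalently, the convergence rate ρ = 1 − λ_min(M) satisfies ρ ≥ 1 − E[d]/(mn), where d = τ₁(k)τ₂(k)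 is the rank of the sampled sketch. -/
open Matrix Kronecker

/-!
Each `Ẑ₁ᵏ` and `Z₂ᵏ` has the form `X (Y X)⁻¹ Y`, an oblique projection whose trace is the size
of the sketch, so `tr M = Σ_k p_k τ₁(k) τ₂(k)` by multiplicativity of the trace under `⊗`.
The smallest eigenvalue is at most the mean eigenvalue `tr M / (mn)`.
-/

theorem Real.iInf_le_sum_div_card {ι : Type*} [Fintype ι] (f : ι → ℝ) :
    ⨅ i, f i ≤ (∑ i, f i) / Fintype.card ι := by
  cases isEmpty_or_nonempty ι with
  | inl _ => simp
  | inr _ =>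
    rw [le_div_iff₀ (by exact_mod_cast Fintype.card_pos), mul_comm, ← nsmul_eq_mul]
    exact Finset.card_nsmul_le_sum _ _ _ fun i _ => ciInf_le (Finite.bddBelow_range f) i

theorem Matrix.trace_mul_inv_mul_eq_card {m k R : Type*} [Fintype m] [Fintype k]
    [DecidableEq k] [CommRing R] (X : Matrix m k R) (Y : Matrix k m R) (h : IsUnit (Y * X).det) :
    (X * (Y * X)⁻¹ * Y).trace = Fintype.card k := by
  rw [Matrix.mul_assoc, trace_mul_comm, Matrix.mul_assoc, nonsing_inv_mul _ h, trace_one]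

theorem stmt_6_general {m n p q r : ℕ} (τ₁ τ₂ : Fin r → ℕ)
    (G : Matrix (Fin m) (Fin m) ℝ)
    (Gh : Matrix (Fin m) (Fin m) ℝ) (hGhsq : Gh * Gh = G)
    (A : Matrix (Fin p) (Fin m) ℝ) (B : Matrix (Fin n) (Fin q) ℝ)
    (S : ∀ k : Fin r, Matrix (Fin p) (Fin (τ₁ k)) ℝ)
    (P : ∀ k : Fin r, Matrix (Fin q) (Fin (τ₂ k)) ℝ)
    (hS : ∀ k, IsUnit ((S k)ᵀ * A * G⁻¹ * Aᵀ * S k).det)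
    (hP : ∀ k, IsUnit ((P k)ᵀ * Bᵀ * B * P k).det)
    (w : Fin r → ℝ) :
    let Zh1 : Fin r → Matrix (Fin m) (Fin m) ℝ := fun k =>
      Gh⁻¹ * Aᵀ * S k * ((S k)ᵀ * A * G⁻¹ * Aᵀ * S k)⁻¹ * (S k)ᵀ * A * Gh⁻¹
    let Z2 : Fin r → Matrix (Fin n) (Fin n) ℝ := fun k =>
      B * P k * ((P k)ᵀ * Bᵀ * B * P k)⁻¹ * (P k)ᵀ * Bᵀ
    let M : Matrix (Fin n × Fin m) (Fin n × Fin m) ℝ := ∑ k, w k • (Z2 k ⊗ₖ Zh1 k)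
    ∀ hM : M.IsHermitian,
      (⨅ i, hM.eigenvalues i) ≤ (∑ k, w k * (τ₁ k : ℝ) * (τ₂ k : ℝ)) / ((m : ℝ) * n) := by
  intro Zh1 Z2 M hM
  have hGinv : G⁻¹ = Gh⁻¹ * Gh⁻¹ := by rw [← hGhsq, Matrix.mul_inv_rev]
  have trace_Zh1 (k : Fin r) : (Zh1 k).trace = τ₁ k := by
    have := trace_mul_inv_mul_eq_card (Gh⁻¹ * Aᵀ * S k) ((S k)ᵀ * A * Gh⁻¹)
      (by simpa only [hGinv, Matrix.mul_assoc] using hS k)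
    simpa only [Zh1, hGinv, Matrix.mul_assoc, Fintype.card_fin] using this
  have trace_Z2 (k : Fin r) : (Z2 k).trace = τ₂ k := by
    have := trace_mul_inv_mul_eq_card (B * P k) ((P k)ᵀ * Bᵀ)
      (by simpa only [Matrix.mul_assoc] using hP k)
    simpa only [Z2, Matrix.mul_assoc, Fintype.card_fin] using this
  have trace_M : M.trace = ∑ k, w k * τ₁ k * τ₂ k := by
    simp only [M, trace_sum, trace_smul, trace_kronecker, trace_Zh1, trace_Z2, smul_eq_mul]
    exact Finset.sum_congr rfl fun k _ => by ring
  calc ⨅ i, hM.eigenvalues i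
      ≤ (∑ i, hM.eigenvalues i) / Fintype.card (Fin n × Fin m) := Real.iInf_le_sum_div_card _
    _ = (∑ k, w k * τ₁ k * τ₂ k) / (m * n) := by
      rw [← trace_M, hM.trace_eq_sum_eigenvalues, Fintype.card_prod, Fintype.card_fin,
        Fintype.card_fin, Nat.cast_mul, mul_comm]
      simp

/-- lower bound on the convergence rate:
`λ_min(M) ≤ (Σ_k p_k τ₁(k) τ₂(k))/(mn)` for `M = Σ_k p_k (Z₂ᵏ ⊗ Ẑ₁ᵏ)`. -/
theorem stmt_6 {m n p q r : ℕ} (τ₁ τ₂ : Fin r → ℕ)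
    (G : Matrix (Fin m) (Fin m) ℝ) (hG : G.PosDef)
    (Gh : Matrix (Fin m) (Fin m) ℝ) (hGh : Gh.PosDef) (hGhsq : Gh * Gh = G)
    (A : Matrix (Fin p) (Fin m) ℝ) (B : Matrix (Fin n) (Fin q) ℝ)
    (S : ∀ k : Fin r, Matrix (Fin p) (Fin (τ₁ k)) ℝ)
    (P : ∀ k : Fin r, Matrix (Fin q) (Fin (τ₂ k)) ℝ)
    (hS : ∀ k, IsUnit ((S k)ᵀ * A * G⁻¹ * Aᵀ * S k).det)
    (hP : ∀ k, IsUnit ((P k)ᵀ * Bᵀ * B * P k).det)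
    (w : Fin r → ℝ) (hw : ∀ k, 0 ≤ w k) (hw1 : ∑ k, w k = 1) :
    let Zh1 : Fin r → Matrix (Fin m) (Fin m) ℝ := fun k =>
      Gh⁻¹ * Aᵀ * S k * ((S k)ᵀ * A * G⁻¹ * Aᵀ * S k)⁻¹ * (S k)ᵀ * A * Gh⁻¹
    let Z2 : Fin r → Matrix (Fin n) (Fin n) ℝ := fun k =>
      B * P k * ((P k)ᵀ * Bᵀ * B * P k)⁻¹ * (P k)ᵀ * Bᵀ
    let M : Matrix (Fin n × Fin m) (Fin n × Fin m) ℝ := ∑ k, w k • (Z2 k ⊗ₖ Zh1 k)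
    ∀ hM : M.IsHermitian,
      (⨅ i, hM.eigenvalues i) ≤ (∑ k, w k * (τ₁ k : ℝ) * (τ₂ k : ℝ)) / ((m : ℝ) * n) :=
  stmt_6_general τ₁ τ₂ G Gh hGhsq A B S P hS hP w
end

section
/- (Global randomized Kaczmarz, one-step expected decrease.) Let A be a p×m real matrix all of whose rows are nonzero, B an n×q real matrix all of whose columns are nonzero, and X*, X m×n real matrices with AX*B = C for a p×q matrix C. For indices i ∈ {1,…,p} and j ∈ {1,…,q} set p_i = ‖A_{i,:}‖₂²/‖A‖_F², p_j = ‖B_{:,j}‖₂²/‖B‖_F², and define X⁺_{ij} = X − (A_{i,:})ᵀ(A_{i,:}XB_{:,j} − C_{ij})(B_{:,j})ᵀ/(‖A_{i,:}‖₂²‖B_{:,j}‖₂²). Then Σ_{i=1}^{p} Σ_{j=1}^{q} p_i p_j ‖X⁺_{ij} − X*‖_F² ≤ (1 − λ_min(AᵀA)λ_min(BBᵀ)/(‖A‖_F²‖B‖_F²))·‖X − X*‖_F². -/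
/-!
Write `E = X - X*`, `a = A_{i,:}` and `b = B_{:,j}`. Since `a X* b = C_{ij}`, the update removes
from `E` its component along the rank-one matrix `a bᵀ`, so by Pythagoras
`‖X⁺_{ij} - X*‖_F² = ‖E‖_F² - (a E b)² / (‖a‖²‖b‖²)`. The weights `p_i p_j` cancel these
denominators, so the expected error is `‖E‖_F² - ‖A E B‖_F² / (‖A‖_F²‖B‖_F²)`, and
`‖A E B‖_F² ≥ λ_min(AᵀA) ‖E B‖_F² ≥ λ_min(AᵀA) λ_min(BBᵀ) ‖E‖_F²` because `AᵀA - λ_min(AᵀA) I`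
and `BBᵀ - λ_min(BBᵀ) I` are positive semidefinite.
-/

open Matrix

lemma mul_sub_div_le_one_sub_div_mul {t S R μ : ℝ} (ht : 0 ≤ t) (hS : 0 ≤ S) (h : μ * S ≤ R) :
    (t * S - R) / t ≤ (1 - μ / t) * S := by
  rcases ht.eq_or_lt with rfl | ht
  · simpa using hS
  · rw [one_sub_div ht.ne', div_mul_eq_mul_div]
    gcongr
    linarith

namespace Matrix

variable {m n p q : Type*} [Fintype m] [Fintype n] [Fintype p] [Fintype q]

lemma trace_transpose_mul_self_eq_sum_sq {R : Type*} [CommSemiring R] (M : Matrix m n R) :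
    trace (Mᵀ * M) = ∑ i, ∑ j, M i j ^ 2 := by
  rw [trace_mul_comm]
  simp [trace, mul_apply, sq]

lemma trace_transpose_mul_self_nonneg (M : Matrix m n ℝ) : 0 ≤ trace (Mᵀ * M) := by
  rw [trace_transpose_mul_self_eq_sum_sq]
  positivity

omit [Fintype p] [Fintype q] in
lemma mul_mul_apply_eq_dotProduct_mulVec {R : Type*} [NonUnitalSemiring R] (A : Matrix p m R)
    (M : Matrix m n R) (B : Matrix n q R) (i : p) (j : q) :
    (A * M * B) i j = A i ⬝ᵥ M *ᵥ Bᵀ j := by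
  rw [Matrix.mul_assoc]
  rfl

lemma trace_transpose_mul_self_sub_smul_vecMulVec (E : Matrix m n ℝ) (a : m → ℝ) (b : n → ℝ)
    (c : ℝ) :
    trace ((E - c • vecMulVec a b)ᵀ * (E - c • vecMulVec a b))
      = trace (Eᵀ * E) - 2 * c * (a ⬝ᵥ E *ᵥ b) + c ^ 2 * ((a ⬝ᵥ a) * (b ⬝ᵥ b)) := by
  have hmid : a ⬝ᵥ E *ᵥ b = ∑ i, ∑ j, a i * E i j * b j := by
    simp only [dotProduct, mulVec, Finset.mul_sum, mul_assoc]
  have hnorm : (a ⬝ᵥ a) * (b ⬝ᵥ b) = ∑ i, ∑ j, a i * a i * (b j * b j) := by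
    simp only [dotProduct, Finset.sum_mul_sum]
  rw [hmid, hnorm, trace_transpose_mul_self_eq_sum_sq, trace_transpose_mul_self_eq_sum_sq]
  simp only [Finset.mul_sum, ← Finset.sum_sub_distrib, ← Finset.sum_add_distrib]
  refine Finset.sum_congr rfl fun i _ => Finset.sum_congr rfl fun j _ => ?_
  simp only [sub_apply, smul_apply, vecMulVec_apply, smul_eq_mul]
  ring

-- When `a = 0` or `b = 0`, division by zero makes this `X` itself.
noncomputable def grkStep (X : Matrix m n ℝ) (a : m → ℝ) (b : n → ℝ) (c : ℝ) : Matrix m n ℝ :=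
  X - ((a ⬝ᵥ X *ᵥ b - c) / ((a ⬝ᵥ a) * (b ⬝ᵥ b))) • vecMulVec a b

lemma mul_trace_grkStep_sub {Xs : Matrix m n ℝ} {a : m → ℝ} {b : n → ℝ} {c : ℝ}
    (hc : a ⬝ᵥ Xs *ᵥ b = c) (X : Matrix m n ℝ) :
    (a ⬝ᵥ a) * (b ⬝ᵥ b) * trace ((grkStep X a b c - Xs)ᵀ * (grkStep X a b c - Xs))
      = (a ⬝ᵥ a) * (b ⬝ᵥ b) * trace ((X - Xs)ᵀ * (X - Xs)) - (a ⬝ᵥ (X - Xs) *ᵥ b) ^ 2 := by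
  have hres : a ⬝ᵥ X *ᵥ b - c = a ⬝ᵥ (X - Xs) *ᵥ b := by
    rw [sub_mulVec, dotProduct_sub, hc]
  rw [grkStep, hres, sub_right_comm, trace_transpose_mul_self_sub_smul_vecMulVec]
  set d := (a ⬝ᵥ a) * (b ⬝ᵥ b)
  by_cases hd : d = 0
  · have hr : a ⬝ᵥ (X - Xs) *ᵥ b = 0 := by
      rcases mul_eq_zero.mp hd with ha | hb
      · rw [dotProduct_self_eq_zero.mp ha, zero_dotProduct]
      · rw [dotProduct_self_eq_zero.mp hb, mulVec_zero, dotProduct_zero]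
    simp [hd, hr]
  · field_simp
    ring

lemma sum_sum_weighted_trace_grkStep_sub (A : Matrix p m ℝ) (B : Matrix n q ℝ)
    {Xs : Matrix m n ℝ} {C : Matrix p q ℝ} (hC : A * Xs * B = C) (X : Matrix m n ℝ) :
    ∑ i, ∑ j, (A i ⬝ᵥ A i) / trace (Aᵀ * A) * ((Bᵀ j ⬝ᵥ Bᵀ j) / trace (B * Bᵀ)) *
        trace ((grkStep X (A i) (Bᵀ j) (C i j) - Xs)ᵀ * (grkStep X (A i) (Bᵀ j) (C i j) - Xs))
      = (trace (Aᵀ * A) * trace (B * Bᵀ) * trace ((X - Xs)ᵀ * (X - Xs))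
          - trace ((A * (X - Xs) * B)ᵀ * (A * (X - Xs) * B)))
        / (trace (Aᵀ * A) * trace (B * Bᵀ)) := by
  have htA : trace (Aᵀ * A) = ∑ i, A i ⬝ᵥ A i := by rw [trace_mul_comm]; rfl
  have htB : trace (B * Bᵀ) = ∑ j, Bᵀ j ⬝ᵥ Bᵀ j := by rw [trace_mul_comm]; rfl
  have hterm : ∀ i j, (A i ⬝ᵥ A i) / trace (Aᵀ * A) * ((Bᵀ j ⬝ᵥ Bᵀ j) / trace (B * Bᵀ)) *
      trace ((grkStep X (A i) (Bᵀ j) (C i j) - Xs)ᵀ * (grkStep X (A i) (Bᵀ j) (C i j) - Xs))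
      = ((A i ⬝ᵥ A i) * (Bᵀ j ⬝ᵥ Bᵀ j) * trace ((X - Xs)ᵀ * (X - Xs))
          - ((A * (X - Xs) * B) i j) ^ 2) / (trace (Aᵀ * A) * trace (B * Bᵀ)) := by
    intro i j
    have hsol : A i ⬝ᵥ Xs *ᵥ Bᵀ j = C i j := by rw [← hC, mul_mul_apply_eq_dotProduct_mulVec]
    rw [div_mul_div_comm, div_mul_eq_mul_div, mul_trace_grkStep_sub hsol,
      mul_mul_apply_eq_dotProduct_mulVec]
  simp only [hterm, ← Finset.sum_div, Finset.sum_sub_distrib, ← Finset.sum_mul,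
    ← Finset.sum_mul_sum, ← htA, ← htB]
  rw [trace_transpose_mul_self_eq_sum_sq (A * (X - Xs) * B)]

variable [DecidableEq m]

open scoped MatrixOrder in
lemma IsHermitian.posSemidef_sub_smul_one {M : Matrix m m ℝ} (hM : M.IsHermitian) {c : ℝ}
    (hc : ∀ i, c ≤ hM.eigenvalues i) : (M - c • 1).PosSemidef := by
  have hle : algebraMap ℝ _ c ≤ M := by
    rw [algebraMap_le_iff_le_spectrum (a := M) hM.isSelfAdjoint,
      hM.spectrum_real_eq_range_eigenvalues]
    rintro _ ⟨i, rfl⟩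
    exact hc i
  simpa [le_iff, Algebra.algebraMap_eq_smul_one] using hle

lemma IsHermitian.mul_trace_le_of_le_eigenvalues {M : Matrix m m ℝ} (hM : M.IsHermitian) {c : ℝ}
    (hc : ∀ i, c ≤ hM.eigenvalues i) (N : Matrix m n ℝ) :
    c * trace (Nᵀ * N) ≤ trace (Nᵀ * M * N) := by
  have h := ((hM.posSemidef_sub_smul_one hc).conjTranspose_mul_mul_same N).trace_nonneg
  rw [conjTranspose_eq_transpose_of_trivial, Matrix.mul_sub, Matrix.sub_mul, trace_sub,
    Matrix.mul_smul, Matrix.mul_one, Matrix.smul_mul, trace_smul, smul_eq_mul] at h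
  linarith

lemma iInf_eigenvalues_mul_trace_le (A : Matrix p m ℝ) (hA : (Aᵀ * A).IsHermitian)
    (N : Matrix m n ℝ) :
    (⨅ i, hA.eigenvalues i) * trace (Nᵀ * N) ≤ trace ((A * N)ᵀ * (A * N)) := by
  have h := hA.mul_trace_le_of_le_eigenvalues
    (fun i => ciInf_le (Set.finite_range _).bddBelow i) N
  rwa [transpose_mul, Matrix.mul_assoc, ← Matrix.mul_assoc Aᵀ, ← Matrix.mul_assoc]

lemma iInf_eigenvalues_nonneg (A : Matrix p m ℝ) (hA : (Aᵀ * A).IsHermitian) :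
    0 ≤ ⨅ i, hA.eigenvalues i := by
  have hpsd : (Aᵀ * A).PosSemidef := by
    simpa [conjTranspose_eq_transpose_of_trivial] using posSemidef_conjTranspose_mul_self A
  exact Real.iInf_nonneg hpsd.eigenvalues_nonneg

lemma iInf_eigenvalues_mul_iInf_eigenvalues_mul_trace_le (A : Matrix p m ℝ) (B : Matrix n q ℝ)
    [DecidableEq n] (hA : (Aᵀ * A).IsHermitian) (hB : (B * Bᵀ).IsHermitian) (E : Matrix m n ℝ) :
    (⨅ i, hA.eigenvalues i) * (⨅ j, hB.eigenvalues j) * trace (Eᵀ * E)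
      ≤ trace ((A * E * B)ᵀ * (A * E * B)) := by
  have hEB : (⨅ j, hB.eigenvalues j) * trace (Eᵀ * E) ≤ trace ((E * B)ᵀ * (E * B)) := by
    have h : (⨅ j, hB.eigenvalues j) * trace (E * Eᵀ) ≤ trace ((Bᵀ * Eᵀ)ᵀ * (Bᵀ * Eᵀ)) :=
      iInf_eigenvalues_mul_trace_le Bᵀ hB Eᵀ
    rwa [← transpose_mul, trace_transpose_mul, trace_mul_comm] at h
  calc (⨅ i, hA.eigenvalues i) * (⨅ j, hB.eigenvalues j) * trace (Eᵀ * E)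
      ≤ (⨅ i, hA.eigenvalues i) * trace ((E * B)ᵀ * (E * B)) := by
        rw [mul_assoc]
        exact mul_le_mul_of_nonneg_left hEB (iInf_eigenvalues_nonneg A hA)
    _ ≤ trace ((A * E * B)ᵀ * (A * E * B)) := by
        rw [Matrix.mul_assoc A]
        exact iInf_eigenvalues_mul_trace_le A hA (E * B)

end Matrix

theorem stmt_13_general {m n p q : ℕ}
    (A : Matrix (Fin p) (Fin m) ℝ) (B : Matrix (Fin n) (Fin q) ℝ)
    (Xs X : Matrix (Fin m) (Fin n) ℝ) (C : Matrix (Fin p) (Fin q) ℝ)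
    (hC : A * Xs * B = C) :
    let Xp : Fin p → Fin q → Matrix (Fin m) (Fin n) ℝ := fun i j =>
      X - ((A i ⬝ᵥ X *ᵥ Bᵀ j - C i j) / ((A i ⬝ᵥ A i) * (Bᵀ j ⬝ᵥ Bᵀ j))) •
        vecMulVec (A i) (Bᵀ j)
    ∀ (hAA : (Aᵀ * A).IsHermitian) (hBB : (B * Bᵀ).IsHermitian),
      ∑ i, ∑ j,
        ((A i ⬝ᵥ A i) / Matrix.trace (Aᵀ * A)) *
          ((Bᵀ j ⬝ᵥ Bᵀ j) / Matrix.trace (B * Bᵀ)) *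
          Matrix.trace ((Xp i j - Xs)ᵀ * (Xp i j - Xs))
      ≤ (1 - (⨅ i, hAA.eigenvalues i) * (⨅ j, hBB.eigenvalues j) /
            (Matrix.trace (Aᵀ * A) * Matrix.trace (B * Bᵀ))) *
          Matrix.trace ((X - Xs)ᵀ * (X - Xs)) := by
  intro Xp hAA hBB
  refine (sum_sum_weighted_trace_grkStep_sub A B hC X).trans_le ?_
  exact mul_sub_div_le_one_sub_div_mul
    (mul_nonneg (trace_transpose_mul_self_nonneg A) (trace_transpose_mul_self_nonneg Bᵀ))
    (trace_transpose_mul_self_nonneg (X - Xs))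
    (iInf_eigenvalues_mul_iInf_eigenvalues_mul_trace_le A B hAA hBB (X - Xs))

/-- global randomized Kaczmarz, one-step expected decrease. -/
theorem stmt_13 {m n p q : ℕ}
    (A : Matrix (Fin p) (Fin m) ℝ) (B : Matrix (Fin n) (Fin q) ℝ)
    (hA : ∀ i, A i ≠ 0) (hB : ∀ j, Bᵀ j ≠ 0)
    (Xs X : Matrix (Fin m) (Fin n) ℝ) (C : Matrix (Fin p) (Fin q) ℝ)
    (hC : A * Xs * B = C) :
    let Xp : Fin p → Fin q → Matrix (Fin m) (Fin n) ℝ := fun i j =>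
      X - ((A i ⬝ᵥ X *ᵥ Bᵀ j - C i j) / ((A i ⬝ᵥ A i) * (Bᵀ j ⬝ᵥ Bᵀ j))) •
        vecMulVec (A i) (Bᵀ j)
    ∀ (hAA : (Aᵀ * A).IsHermitian) (hBB : (B * Bᵀ).IsHermitian),
      ∑ i, ∑ j,
        ((A i ⬝ᵥ A i) / Matrix.trace (Aᵀ * A)) *
          ((Bᵀ j ⬝ᵥ Bᵀ j) / Matrix.trace (B * Bᵀ)) *
          Matrix.trace ((Xp i j - Xs)ᵀ * (Xp i j - Xs))
      ≤ (1 - (⨅ i, hAA.eigenvalues i) * (⨅ j, hBB.eigenvalues j) /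
            (Matrix.trace (Aᵀ * A) * Matrix.trace (B * Bᵀ))) *
          Matrix.trace ((X - Xs)ᵀ * (X - Xs)) :=
  stmt_13_general A B Xs X C hC
end

section
/- (Randomized Kaczmarz for B, one-step expected decrease.) Let A be a p×m real matrix with full column rank (so AᵀA is invertible and A† = (AᵀA)⁻¹Aᵀ), and let B be an n×q real matrix all of whose columns are nonzero. Let X*, X be m×n real matrices and set C = AX*B. For j ∈ {1,…,q} set p_j = ‖B_{:,j}‖₂²/‖B‖_F² and X⁺_j = X + A†(C_{:,j} − AXB_{:,j})(B_{:,j})ᵀ/‖B_{:,j}‖₂². Then Σ_{j=1}^{q} p_j ‖X⁺_j − X*‖_F² ≤ (1 − λ_min(BBᵀ)/‖B‖_F²)·‖X − X*‖_F². -/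
/-!
Put `E = X - X*`. Full column rank gives `A† A = 1`, so the RK-B step is
`X⁺_j - X* = E (1 - P_j)` with `P_j = b_j b_jᵀ / ‖b_j‖²` the orthogonal projector onto the column
`b_j = B_{:,j}`. Hence `‖X⁺_j - X*‖_F² = tr (E (1 - P_j) Eᵀ)`, and since `∑ j, ‖b_j‖² P_j = B Bᵀ`,
the weighted average equals `‖E‖_F² - tr (E B Bᵀ Eᵀ) / ‖B‖_F²`. Finally
`λ_min(B Bᵀ) • 1 ≤ B Bᵀ` in the Loewner order, so `tr (E B Bᵀ Eᵀ) ≥ λ_min(B Bᵀ) ‖E‖_F²`.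
-/

open Matrix

namespace Matrix

variable {l m n p q R K : Type*}

theorem mul_eq_sum_vecMulVec [Fintype m] [NonUnitalNonAssocSemiring R]
    (A : Matrix l m R) (B : Matrix m n R) : A * B = ∑ k, vecMulVec (Aᵀ k) (B k) := by
  ext i j
  simp [mul_apply, vecMulVec_apply, sum_apply]

theorem trace_mul_transpose_self_eq_sum [Fintype n] [Fintype q] [NonUnitalNonAssocSemiring R]
    (B : Matrix n q R) : trace (B * Bᵀ) = ∑ j, Bᵀ j ⬝ᵥ Bᵀ j := by
  simp [mul_eq_sum_vecMulVec B Bᵀ, trace_sum]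

theorem trace_transpose_mul_self_of_symm_idempotent [Fintype m] [Fintype n] [CommRing R]
    (E : Matrix m n R) {Q : Matrix n n R} (hQt : Qᵀ = Q) (hQ : IsIdempotentElem Q) :
    trace ((E * Q)ᵀ * (E * Q)) = trace (E * Q * Eᵀ) := by
  rw [trace_mul_comm, transpose_mul, hQt, Matrix.mul_assoc E Q, ← Matrix.mul_assoc Q, hQ.eq,
    ← Matrix.mul_assoc]

theorem isUnit_of_rank_eq_card [Fintype n] [DecidableEq n] [Field K] {A : Matrix n n K}
    (hA : A.rank = Fintype.card n) : IsUnit A := by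
  rw [← mulVec_surjective_iff_isUnit]
  change Function.Surjective A.mulVecLin
  rw [← LinearMap.range_eq_top]
  exact Submodule.eq_top_of_finrank_eq (by rw [← rank, hA, Module.finrank_fintype_fun_eq_card])

theorem isUnit_transpose_mul_self_of_rank_eq [Fintype m] [Fintype n] [DecidableEq n] [Field K]
    [LinearOrder K] [IsStrictOrderedRing K] {A : Matrix m n K} (hA : A.rank = Fintype.card n) :
    IsUnit (Aᵀ * A) :=
  isUnit_of_rank_eq_card (by rw [rank_transpose_mul_self, hA])

section lineProj

variable [Fintype n] [Field K]

/-- Since `0⁻¹ = 0`, `lineProj 0 = 0`, which is still a symmetric idempotent. -/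
noncomputable def lineProj (b : n → K) : Matrix n n K := (b ⬝ᵥ b)⁻¹ • vecMulVec b b

theorem transpose_lineProj (b : n → K) : (lineProj b)ᵀ = lineProj b := by
  rw [lineProj, transpose_smul, transpose_vecMulVec]

theorem isIdempotentElem_lineProj (b : n → K) : IsIdempotentElem (lineProj b) := by
  simp only [IsIdempotentElem, lineProj, Matrix.smul_mul, Matrix.mul_smul,
    vecMulVec_mul_vecMulVec, vecMulVec_smul, smul_smul]
  congr 1
  rcases eq_or_ne (b ⬝ᵥ b) 0 with h | h
  · simp [h]
  · field_simp

theorem dotProduct_self_smul_lineProj [LinearOrder K] [IsStrictOrderedRing K] (b : n → K) :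
    (b ⬝ᵥ b) • lineProj b = vecMulVec b b := by
  rcases eq_or_ne b 0 with rfl | hb
  · simp [lineProj]
  · rw [lineProj, smul_smul, mul_inv_cancel₀ (dotProduct_self_eq_zero.not.mpr hb), one_smul]

theorem sum_dotProduct_self_mul_trace_one_sub_lineProj [Fintype m] [Fintype q] [DecidableEq n]
    [LinearOrder K] [IsStrictOrderedRing K] (B : Matrix n q K) (E : Matrix m n K) :
    ∑ j, (Bᵀ j ⬝ᵥ Bᵀ j) * trace (E * (1 - lineProj (Bᵀ j)) * Eᵀ)
      = trace (B * Bᵀ) * trace (E * Eᵀ) - trace (E * (B * Bᵀ) * Eᵀ) := by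
  have hterm : ∀ j, (Bᵀ j ⬝ᵥ Bᵀ j) * trace (E * (1 - lineProj (Bᵀ j)) * Eᵀ)
      = (Bᵀ j ⬝ᵥ Bᵀ j) * trace (E * Eᵀ) - trace (E * vecMulVec (Bᵀ j) (Bᵀ j) * Eᵀ) := fun j => by
    rw [Matrix.mul_sub, Matrix.sub_mul, trace_sub, Matrix.mul_one, mul_sub,
      ← dotProduct_self_smul_lineProj, Matrix.mul_smul, Matrix.smul_mul, trace_smul, smul_eq_mul]
  have hBBt : B * Bᵀ = ∑ j, vecMulVec (Bᵀ j) (Bᵀ j) := mul_eq_sum_vecMulVec B Bᵀ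
  rw [Finset.sum_congr rfl fun j _ => hterm j, Finset.sum_sub_distrib, ← Finset.sum_mul,
    ← trace_mul_transpose_self_eq_sum]
  nth_rw 3 [hBBt]
  rw [Matrix.mul_sum, Matrix.sum_mul, trace_sum]

variable [DecidableEq n]

theorem kaczmarz_update_sub [Fintype m] [DecidableEq m] [Fintype p]
    {A : Matrix p m K} {Ad : Matrix m p K} (hAd : Ad * A = 1) (X Xs : Matrix m n K) (b : n → K) :
    X + (1 / (b ⬝ᵥ b)) • vecMulVec (Ad *ᵥ ((A * Xs) *ᵥ b - (A * X) *ᵥ b)) b - Xs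
      = (X - Xs) * (1 - lineProj b) := by
  have hres : Ad *ᵥ ((A * Xs) *ᵥ b - (A * X) *ᵥ b) = (Xs - X) *ᵥ b := by
    rw [← sub_mulVec, ← Matrix.mul_sub, mulVec_mulVec, ← Matrix.mul_assoc, hAd, Matrix.one_mul]
  rw [hres, ← mul_vecMulVec, lineProj, Matrix.mul_sub, Matrix.mul_one, Matrix.mul_smul, one_div,
    ← neg_sub X Xs, Matrix.neg_mul, smul_neg]
  abel

end lineProj

open scoped MatrixOrder in
theorem IsHermitian.iInf_eigenvalues_mul_trace_le [Fintype m] [Fintype n] [DecidableEq n]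
    {M : Matrix n n ℝ} (hM : M.IsHermitian) (E : Matrix m n ℝ) :
    (⨅ k, hM.eigenvalues k) * trace (E * Eᵀ) ≤ trace (E * M * Eᵀ) := by
  have hle : algebraMap ℝ (Matrix n n ℝ) (⨅ k, hM.eigenvalues k) ≤ M := by
    rw [algebraMap_le_iff_le_spectrum (ha := hM.isSelfAdjoint),
      hM.spectrum_real_eq_range_eigenvalues]
    rintro _ ⟨k, rfl⟩
    exact ciInf_le (Finite.bddBelow_range _) k
  have := ((le_iff.mp hle).mul_mul_conjTranspose_same E).trace_nonneg
  rw [conjTranspose_eq_transpose_of_trivial, Matrix.mul_sub, Matrix.sub_mul, trace_sub,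
    Algebra.algebraMap_eq_smul_one, Matrix.mul_smul, Matrix.smul_mul, Matrix.mul_one, trace_smul,
    smul_eq_mul] at this
  linarith

end Matrix

theorem stmt_15_general {m n p q : ℕ}
    (A : Matrix (Fin p) (Fin m) ℝ) (B : Matrix (Fin n) (Fin q) ℝ)
    (hA : A.rank = m)
    (Xs X : Matrix (Fin m) (Fin n) ℝ) :
    let C : Matrix (Fin p) (Fin q) ℝ := A * Xs * B
    let Ad : Matrix (Fin m) (Fin p) ℝ := (Aᵀ * A)⁻¹ * Aᵀ
    let Xp : Fin q → Matrix (Fin m) (Fin n) ℝ := fun j =>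
      X + (1 / (Bᵀ j ⬝ᵥ Bᵀ j)) • vecMulVec (Ad *ᵥ (Cᵀ j - (A * X) *ᵥ Bᵀ j)) (Bᵀ j)
    ∀ (hBB : (B * Bᵀ).IsHermitian),
      ∑ j, ((Bᵀ j ⬝ᵥ Bᵀ j) / Matrix.trace (B * Bᵀ)) *
          Matrix.trace ((Xp j - Xs)ᵀ * (Xp j - Xs))
      ≤ (1 - (⨅ k, hBB.eigenvalues k) / Matrix.trace (B * Bᵀ)) *
          Matrix.trace ((X - Xs)ᵀ * (X - Xs)) := by
  intro C Ad Xp hBB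
  have hAd : Ad * A = 1 := by
    rw [Matrix.mul_assoc, nonsing_inv_mul _ ((isUnit_iff_isUnit_det _).mp
      (isUnit_transpose_mul_self_of_rank_eq (by rw [hA, Fintype.card_fin])))]
  have hstep : ∀ j, Xp j - Xs = (X - Xs) * (1 - lineProj (Bᵀ j)) := fun j => by
    have hC : Cᵀ j = (A * Xs) *ᵥ Bᵀ j := by
      ext i
      simp [C, mul_apply, mulVec, dotProduct]
    simp only [Xp, hC]
    exact kaczmarz_update_sub hAd X Xs (Bᵀ j)
  set E := X - Xs
  set T := trace (B * Bᵀ)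
  have hexp : ∑ j, (Bᵀ j ⬝ᵥ Bᵀ j / T) * trace ((Xp j - Xs)ᵀ * (Xp j - Xs))
      = T⁻¹ * (T * trace (E * Eᵀ) - trace (E * (B * Bᵀ) * Eᵀ)) := by
    rw [← sum_dotProduct_self_mul_trace_one_sub_lineProj, Finset.mul_sum]
    refine Finset.sum_congr rfl fun j _ => ?_
    rw [hstep, trace_transpose_mul_self_of_symm_idempotent E
      (by rw [transpose_sub, transpose_one, transpose_lineProj])
      (isIdempotentElem_lineProj _).one_sub, div_eq_inv_mul, mul_assoc]
  have hray := hBB.iInf_eigenvalues_mul_trace_le E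
  have hE : 0 ≤ trace (E * Eᵀ) := (posSemidef_self_mul_conjTranspose E).trace_nonneg
  rw [hexp, trace_mul_comm Eᵀ]
  have hT : 0 ≤ T := by simpa using (posSemidef_self_mul_conjTranspose B).trace_nonneg
  rcases hT.eq_or_lt with hT | hT
  · rw [← hT]
    simpa using hE
  · rw [one_sub_div hT.ne', div_mul_eq_mul_div, div_eq_inv_mul]
    gcongr
    linarith

/-- randomized Kaczmarz for `B` (RK-B), one-step expected decrease. -/
theorem stmt_15 {m n p q : ℕ}
    (A : Matrix (Fin p) (Fin m) ℝ) (B : Matrix (Fin n) (Fin q) ℝ)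
    (hA : A.rank = m) (hB : ∀ j, Bᵀ j ≠ 0)
    (Xs X : Matrix (Fin m) (Fin n) ℝ) :
    let C : Matrix (Fin p) (Fin q) ℝ := A * Xs * B
    let Ad : Matrix (Fin m) (Fin p) ℝ := (Aᵀ * A)⁻¹ * Aᵀ
    let Xp : Fin q → Matrix (Fin m) (Fin n) ℝ := fun j =>
      X + (1 / (Bᵀ j ⬝ᵥ Bᵀ j)) • vecMulVec (Ad *ᵥ (Cᵀ j - (A * X) *ᵥ Bᵀ j)) (Bᵀ j)
    ∀ (hBB : (B * Bᵀ).IsHermitian),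
      ∑ j, ((Bᵀ j ⬝ᵥ Bᵀ j) / Matrix.trace (B * Bᵀ)) *
          Matrix.trace ((Xp j - Xs)ᵀ * (Xp j - Xs))
      ≤ (1 - (⨅ k, hBB.eigenvalues k) / Matrix.trace (B * Bᵀ)) *
          Matrix.trace ((X - Xs)ᵀ * (X - Xs)) :=
  stmt_15_general A B hA Xs X
end

section
/- (Randomized coordinate descent for positive definite A, one-step expected decrease.) Let A be an m×m real symmetric positive definite matrix, B an n×q real matrix with full row rank (so B† = Bᵀ(BBᵀ)⁻¹), and X*, X m×n real matrices with C = AX*B. For i ∈ {1,…,m} set p_i = A_{ii}/Tr(A) and define X⁺_i = X − e_i((A_{:,i})ᵀXB − C_{i,:})B†/A_{ii}, where e_i is the i-th standard basis column vector of ℝᵐ. Then Σ_{i=1}^{m} p_i ‖X⁺_i − X*‖²_{F(A)} ≤ (1 − λ_min(A)/Tr(A))·‖X − X*‖²_{F(A)}, where ‖M‖²_{F(A)} = Tr(MᵀAM). -/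
/-!
With `R = X - Xs`, the identities `C = A Xs B` and `B B† = 1` turn the `i`-th step into
`R ↦ R - A_ii⁻¹ e_i (AR)_{i,:}`, which lowers `‖R‖²_{F(A)}` by exactly `‖(AR)_{i,:}‖² / A_ii`.
Averaging with the weights `A_ii / Tr A` gives the decrease `‖AR‖²_F / Tr A`, and
`‖AR‖²_F = Tr (Rᵀ A² R) ≥ λ_min Tr (Rᵀ A R)` because `A² - λ_min A` is positive semidefinite.
-/

open Matrix

namespace Matrix

variable {m n q R : Type*} [Fintype m] [Fintype n] [Fintype q]

lemma mul_transpose_mul_inv_eq_one [Field R] [LinearOrder R] [IsStrictOrderedRing R]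
    [DecidableEq n] {B : Matrix n q R} (hB : B.rank = Fintype.card n) :
    B * (Bᵀ * (B * Bᵀ)⁻¹) = 1 := by
  have hrank : (B * Bᵀ).rank = Fintype.card n := by rw [rank_self_mul_transpose, hB]
  have hsurj : Function.Surjective (B * Bᵀ).mulVecLin := by
    rw [← LinearMap.range_eq_top]
    apply Submodule.eq_top_of_finrank_eq
    rw [← Matrix.rank, hrank, Module.finrank_fintype_fun_eq_card]
  have hunit : IsUnit (B * Bᵀ) := mulVec_surjective_iff_isUnit.mp hsurj
  rw [← Matrix.mul_assoc, mul_nonsing_inv _ ((isUnit_iff_isUnit_det _).mp hunit)]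

lemma coordinate_residual_eq_row_mul_sub [CommRing R] [DecidableEq n] {A : Matrix m m R}
    (hA : Aᵀ = A) {B : Matrix n q R} {Bd : Matrix q n R} (hB : B * Bd = 1)
    (X Xs : Matrix m n R) (i : m) :
    ((Aᵀ i ᵥ* X) ᵥ* B - (A * Xs * B) i) ᵥ* Bd = (A * (X - Xs)) i := by
  change ((Aᵀ i ᵥ* X) ᵥ* B - (A i ᵥ* Xs) ᵥ* B) ᵥ* Bd = A i ᵥ* (X - Xs)
  rw [hA, ← sub_vecMul, ← vecMul_sub, vecMul_vecMul, hB, vecMul_one]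

lemma trace_transpose_vecMulVec_single_mul [CommRing R] [DecidableEq m] (i : m) (u : n → R)
    (M : Matrix m n R) : trace ((vecMulVec (Pi.single i 1) u)ᵀ * M) = u ⬝ᵥ M i := by
  rw [transpose_vecMulVec, vecMulVec_mul, single_one_vecMul, trace_vecMulVec, row]

lemma trace_transpose_sub_smul_mul_mul_sub_smul [CommRing R] {A : Matrix m m R} (hA : Aᵀ = A)
    (M D : Matrix m n R) (c : R) :
    trace ((M - c • D)ᵀ * A * (M - c • D))
      = trace (Mᵀ * A * M) - 2 * c * trace (Dᵀ * A * M) + c ^ 2 * trace (Dᵀ * A * D) := by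
  have hcross : trace (Mᵀ * A * D) = trace (Dᵀ * A * M) := by
    rw [← trace_transpose, transpose_mul, transpose_mul, transpose_transpose, hA,
      Matrix.mul_assoc]
  simp only [transpose_sub, transpose_smul, Matrix.sub_mul, Matrix.mul_sub, Matrix.smul_mul,
    Matrix.mul_smul, trace_sub, trace_smul, smul_eq_mul, hcross]
  ring

lemma trace_transpose_mul_mul_coordinate_step [Field R] [DecidableEq m] {A : Matrix m m R}
    (hA : Aᵀ = A) {i : m} (hAi : A i i ≠ 0) (M : Matrix m n R) :
    trace ((M - (1 / A i i) • vecMulVec (Pi.single i 1) ((A * M) i))ᵀ * A *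
        (M - (1 / A i i) • vecMulVec (Pi.single i 1) ((A * M) i)))
      = trace (Mᵀ * A * M) - (A * M) i ⬝ᵥ (A * M) i / A i i := by
  set u := (A * M) i
  set D := vecMulVec (Pi.single i 1) u
  have hDM : trace (Dᵀ * A * M) = u ⬝ᵥ u := by
    rw [Matrix.mul_assoc, trace_transpose_vecMulVec_single_mul]
  have hDD : trace (Dᵀ * A * D) = A i i * (u ⬝ᵥ u) := by
    rw [Matrix.mul_assoc, trace_transpose_vecMulVec_single_mul, mul_vecMulVec, mulVec_single_one]
    change u ⬝ᵥ (A i i • u) = _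
    rw [dotProduct_smul, smul_eq_mul]
  rw [trace_transpose_sub_smul_mul_mul_sub_smul hA, hDM, hDD]
  field_simp
  ring

lemma sum_div_sum_mul_sub_div [Field R] {w : m → R} (hw : ∀ i, w i ≠ 0) (ht : ∑ i, w i ≠ 0)
    (T : R) (s : m → R) :
    ∑ i, w i / (∑ j, w j) * (T - s i / w i) = T - (∑ i, s i) / ∑ j, w j := by
  have h : ∀ i, w i / (∑ j, w j) * (T - s i / w i) = w i * T / (∑ j, w j) - s i / ∑ j, w j := by
    intro i
    field_simp [hw i]
  simp only [h, Finset.sum_sub_distrib, ← Finset.sum_div, ← Finset.sum_mul]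
  field_simp

open scoped MatrixOrder ComplexOrder in
lemma PosSemidef.posSemidef_mul_self_sub_smul {𝕜 : Type*} [RCLike 𝕜] [DecidableEq m]
    {A : Matrix m m 𝕜} (hA : A.PosSemidef) {l : ℝ} (hl : ∀ k, l ≤ hA.1.eigenvalues k) :
    (A * A - l • A).PosSemidef := by
  rw [← nonneg_iff_posSemidef]
  have hcfc : cfc (fun x : ℝ => x * x - l * x) A = A * A - l • A := by
    rw [cfc_sub (fun x : ℝ => x * x) (fun x => l * x), cfc_mul (fun x : ℝ => x) (fun x => x),
      cfc_const_mul l (fun x : ℝ => x), cfc_id' ℝ A]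
  rw [← hcfc]
  apply cfc_nonneg
  rw [hA.1.spectrum_real_eq_range_eigenvalues]
  rintro _ ⟨k, rfl⟩
  nlinarith [hA.eigenvalues_nonneg k, hl k]

lemma mul_trace_le_sum_row_dotProduct [DecidableEq m] {A : Matrix m m ℝ} (hA : A.PosSemidef)
    {l : ℝ} (hl : ∀ k, l ≤ hA.1.eigenvalues k) (M : Matrix m n ℝ) :
    l * trace (Mᵀ * A * M) ≤ ∑ i, (A * M) i ⬝ᵥ (A * M) i := by
  have hsymm : Aᵀ = A := (isHermitian_iff_isSymm.mp hA.1).eq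
  have hsq : trace (Mᵀ * (A * A) * M) = ∑ i, (A * M) i ⬝ᵥ (A * M) i := by
    have h : Mᵀ * (A * A) * M = (A * M)ᵀ * (A * M) := by
      rw [transpose_mul, hsymm, Matrix.mul_assoc, Matrix.mul_assoc, Matrix.mul_assoc]
    rw [h, trace_mul_comm]
    rfl
  have h := ((hA.posSemidef_mul_self_sub_smul hl).conjTranspose_mul_mul_same M).trace_nonneg
  rw [conjTranspose_eq_transpose_of_trivial, Matrix.mul_sub, Matrix.sub_mul, trace_sub,
    Matrix.mul_smul, Matrix.smul_mul, trace_smul, smul_eq_mul, sub_nonneg, hsq] at h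
  exact h

end Matrix

/-- randomized coordinate descent for positive definite `A`
(CD-pd), one-step expected decrease in the `A`-weighted Frobenius norm. -/
theorem stmt_16 {m n q : ℕ}
    (A : Matrix (Fin m) (Fin m) ℝ) (hA : A.PosDef)
    (B : Matrix (Fin n) (Fin q) ℝ) (hB : B.rank = n)
    (Xs X : Matrix (Fin m) (Fin n) ℝ) :
    let C : Matrix (Fin m) (Fin q) ℝ := A * Xs * B
    let Bd : Matrix (Fin q) (Fin n) ℝ := Bᵀ * (B * Bᵀ)⁻¹
    let Xp : Fin m → Matrix (Fin m) (Fin n) ℝ := fun i =>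
      X - (1 / A i i) • vecMulVec (Pi.single i 1) (((Aᵀ i ᵥ* X) ᵥ* B - C i) ᵥ* Bd)
    ∑ i, (A i i / Matrix.trace A) *
        Matrix.trace ((Xp i - Xs)ᵀ * A * (Xp i - Xs))
      ≤ (1 - (⨅ k, hA.1.eigenvalues k) / Matrix.trace A) *
          Matrix.trace ((X - Xs)ᵀ * A * (X - Xs)) := by
  intro C Bd Xp
  obtain hm | hm := isEmpty_or_nonempty (Fin m)
  · simp [Matrix.trace, Matrix.mul_apply]
  have hsymm : Aᵀ = A := (isHermitian_iff_isSymm.mp hA.1).eq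
  have hdiag : ∀ i, A i i ≠ 0 := fun i => hA.diag_pos.ne'
  have hBd : B * Bd = 1 := mul_transpose_mul_inv_eq_one (hB.trans (Fintype.card_fin n).symm)
  have hstep : ∀ i, Xp i - Xs =
      (X - Xs) - (1 / A i i) • vecMulVec (Pi.single i 1) ((A * (X - Xs)) i) := by
    intro i
    simp only [Xp, C, coordinate_residual_eq_row_mul_sub hsymm hBd]
    abel
  have hmean : ∑ i, (A i i / trace A) * trace ((Xp i - Xs)ᵀ * A * (Xp i - Xs)) =
      trace ((X - Xs)ᵀ * A * (X - Xs)) -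
        (∑ i, (A * (X - Xs)) i ⬝ᵥ (A * (X - Xs)) i) / trace A := by
    simp only [hstep, trace_transpose_mul_mul_coordinate_step hsymm (hdiag _)]
    exact sum_div_sum_mul_sub_div hdiag hA.trace_pos.ne' _ _
  have hmin := mul_trace_le_sum_row_dotProduct hA.posSemidef
    (fun k => ciInf_le (Finite.bddBelow_range _) k) (X - Xs)
  rw [hmean, one_sub_mul, div_mul_eq_mul_div]
  gcongr
  exact hA.trace_pos.le
end

section
/- (Norm of the expected error, one-step contraction.) Let G be an m×m symmetric positive definite real matrix with positive definite square root G^{1/2}, A a p×m real matrix, B an n×q real matrix, and for each k in a finite index set let S_k be a p×τ₁(k) real matrix and P_k a q×τ₂(k) real matrix such that S_kᵀAG⁻¹AᵀS_k and P_kᵀBᵀBP_k are invertible, with weights p_k ≥ 0 summing to 1. Define Z₁'ᵏ = G⁻¹AᵀS_k(S_kᵀAG⁻¹AᵀS_k)⁻¹S_kᵀA, Ẑ₁ᵏ = G^{1/2}Z₁'ᵏG^{-1/2}, Z₂ᵏ = BP_k(P_kᵀBᵀBP_k)⁻¹P_kᵀBᵀ, and ρ = 1 − λ_min(Σ_k p_k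 (Z₂ᵏ ⊗ Ẑ₁ᵏ)). Let X*, X be m×n real matrices, and for each k set X⁺_k = X − Z₁'ᵏ(X − X*)Z₂ᵏ. Then ‖Σ_k p_k (X⁺_k − X*)‖_{F(G)} ≤ ρ·‖X − X*‖_{F(G)}. -/
/-!
Conjugation by `G^{1/2}` turns `Z₁'ᵏ` into the orthogonal projection `Ẑ₁ᵏ` onto the column space
of `G^{-1/2} Aᵀ S_k`, and `Z₂ᵏ` is the orthogonal projection onto the column space of `B P_k`.
Since `‖N‖_{F(G)} = ‖vec (G^{1/2} N)‖₂` and `vec (Ẑ E Z) = (Z ⊗ Ẑ) vec E` for symmetric `Z`,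
the expected error is `(I - M) vec (G^{1/2} (X - X*))` with `M = Σ p_k (Z₂ᵏ ⊗ Ẑ₁ᵏ)`. As a convex
combination of orthogonal projections, `M ≤ I`, so the spectrum of `I - M` lies in `[0, ρ]` and
its operator norm is at most `ρ`.
-/

open Matrix Kronecker

open scoped MatrixOrder

noncomputable def orthProj {l τ : Type*} [Fintype l] [Fintype τ] [DecidableEq τ]
    (V : Matrix l τ ℝ) : Matrix l l ℝ :=
  V * (Vᵀ * V)⁻¹ * Vᵀ

theorem transpose_orthProj {l τ : Type*} [Fintype l] [Fintype τ] [DecidableEq τ]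
    (V : Matrix l τ ℝ) : (orthProj V)ᵀ = orthProj V := by
  simp only [orthProj, transpose_mul, transpose_transpose, transpose_nonsing_inv, Matrix.mul_assoc]

theorem isStarProjection_orthProj {l τ : Type*} [Fintype l] [Fintype τ] [DecidableEq τ]
    (V : Matrix l τ ℝ) (hV : IsUnit (Vᵀ * V).det) : IsStarProjection (orthProj V) where
  isIdempotentElem := by
    rw [IsIdempotentElem, orthProj]
    calc V * (Vᵀ * V)⁻¹ * Vᵀ * (V * (Vᵀ * V)⁻¹ * Vᵀ)
        = V * ((Vᵀ * V)⁻¹ * (Vᵀ * V)) * (Vᵀ * V)⁻¹ * Vᵀ := by simp only [Matrix.mul_assoc]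
      _ = V * (Vᵀ * V)⁻¹ * Vᵀ := by rw [nonsing_inv_mul _ hV, Matrix.mul_one]
  isSelfAdjoint := by
    rw [IsSelfAdjoint, star_eq_conjTranspose, conjTranspose_eq_transpose_of_trivial,
      transpose_orthProj]

theorem IsStarProjection.kronecker {R l m : Type*} [CommSemiring R] [StarRing R]
    [Fintype l] [Fintype m] {p : Matrix l l R} {q : Matrix m m R}
    (hp : IsStarProjection p) (hq : IsStarProjection q) : IsStarProjection (p ⊗ₖ q) where
  isIdempotentElem := by
    rw [IsIdempotentElem, ← mul_kronecker_mul, hp.isIdempotentElem.eq, hq.isIdempotentElem.eq]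
  isSelfAdjoint := by
    rw [IsSelfAdjoint, star_eq_conjTranspose, conjTranspose_kronecker, ← star_eq_conjTranspose,
      ← star_eq_conjTranspose, hp.isSelfAdjoint.star_eq, hq.isSelfAdjoint.star_eq]

open scoped Matrix.Norms.L2Operator in
theorem Matrix.IsHermitian.norm_one_sub_mulVec_le {ι : Type*} [Fintype ι] [DecidableEq ι]
    {M : Matrix ι ι ℝ} (hM : M.IsHermitian) (hM1 : M ≤ 1) (v : ι → ℝ) :
    ‖WithLp.toLp 2 ((1 - M) *ᵥ v)‖ ≤ (1 - ⨅ i, hM.eigenvalues i) * ‖WithLp.toLp 2 v‖ := by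
  have hbdd : BddBelow (Set.range hM.eigenvalues) := (Set.finite_range _).bddBelow
  have hle_one : ∀ i, hM.eigenvalues i ≤ 1 := fun i =>
    (le_algebraMap_iff_spectrum_le hM.isSelfAdjoint).1 (by simpa using hM1) _
      (hM.eigenvalues_mem_spectrum_real i)
  have hρ : 0 ≤ 1 - ⨅ i, hM.eigenvalues i := by
    rcases isEmpty_or_nonempty ι with hι | ⟨⟨i⟩⟩
    · simp [Real.iInf_of_isEmpty]
    · linarith [ciInf_le hbdd i, hle_one i]
  have hT : ‖1 - M‖ ≤ 1 - ⨅ i, hM.eigenvalues i := by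
    have h : cfc (fun x : ℝ => 1 - x) M = 1 - M := by
      rw [cfc_sub (fun _ : ℝ => 1) (fun x : ℝ => x) M, cfc_const_one ℝ M, cfc_id' ℝ M]
    rw [← h]
    refine norm_cfc_le hρ ?_
    rw [hM.spectrum_real_eq_range_eigenvalues]
    rintro _ ⟨i, rfl⟩
    rw [Real.norm_eq_abs, abs_of_nonneg (sub_nonneg.2 (hle_one i))]
    linarith [ciInf_le hbdd i]
  exact (l2_opNorm_mulVec _ (WithLp.toLp 2 v)).trans (mul_le_mul_of_nonneg_right hT (norm_nonneg _))

theorem Matrix.vec_sub_sum_smul_mul_mul_transpose {ι R m n : Type*} [CommRing R] [Fintype m]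
    [Fintype n] [DecidableEq m] [DecidableEq n] (s : Finset ι) (w : ι → R)
    (U : ι → Matrix m m R) (W : ι → Matrix n n R) (E : Matrix m n R) :
    vec (E - ∑ k ∈ s, w k • (U k * E * (W k)ᵀ)) = (1 - ∑ k ∈ s, w k • (W k ⊗ₖ U k)) *ᵥ vec E := by
  simp only [vec_sub, vec_sum, vec_smul, sub_mulVec, one_mulVec, sum_mulVec, smul_mulVec,
    kronecker_mulVec_vec]

theorem vec_mul_sum_smul_sub_eq_mulVec {ι R m n : Type*} [CommRing R] [Fintype m] [Fintype n]
    [DecidableEq m] [DecidableEq n] {Gh : Matrix m m R} (hGh : IsUnit Gh.det) (s : Finset ι)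
    {w : ι → R} (hw1 : ∑ k ∈ s, w k = 1) (Z1 : ι → Matrix m m R) {Z2 : ι → Matrix n n R}
    (hZ2 : ∀ k, (Z2 k)ᵀ = Z2 k) (X Xs : Matrix m n R) :
    vec (Gh * ∑ k ∈ s, w k • (X - Z1 k * (X - Xs) * Z2 k - Xs))
      = (1 - ∑ k ∈ s, w k • (Z2 k ⊗ₖ (Gh * Z1 k * Gh⁻¹))) *ᵥ vec (Gh * (X - Xs)) := by
  have hterm : ∀ k, Gh * (X - Z1 k * (X - Xs) * Z2 k - Xs)
      = Gh * (X - Xs) - Gh * Z1 k * Gh⁻¹ * (Gh * (X - Xs)) * (Z2 k)ᵀ := by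
    intro k
    rw [sub_right_comm, Matrix.mul_sub, hZ2, Matrix.mul_assoc _ Gh⁻¹,
      nonsing_inv_mul_cancel_left _ _ hGh, Matrix.mul_assoc Gh, Matrix.mul_assoc Gh,
      Matrix.mul_assoc (Z1 k)]
  rw [← vec_sub_sum_smul_mul_mul_transpose, Matrix.mul_sum]
  simp only [Matrix.mul_smul, hterm]
  simp only [smul_sub, Finset.sum_sub_distrib, ← Finset.sum_smul, hw1, one_smul]

theorem normFG_eq_norm_vec {m n : ℕ} {G Gh : Matrix (Fin m) (Fin m) ℝ} (hGhsq : Gh * Gh = G)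
    (hGhT : Ghᵀ = Gh) (N : Matrix (Fin m) (Fin n) ℝ) :
    normFG G N = ‖WithLp.toLp 2 (vec (Gh * N))‖ := by
  have h : Nᵀ * G * N = (Gh * N)ᵀ * (Gh * N) := by
    rw [transpose_mul, hGhT, ← hGhsq, Matrix.mul_assoc, Matrix.mul_assoc, Matrix.mul_assoc]
  rw [normFG, h, ← vec_dotProduct_vec, EuclideanSpace.norm_eq]
  simp [dotProduct, sq]

theorem orthProj_mul_eq {l q τ : Type*} [Fintype l] [Fintype q] [Fintype τ] [DecidableEq τ]
    (B : Matrix l q ℝ) (P : Matrix q τ ℝ) :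
    orthProj (B * P) = B * P * (Pᵀ * Bᵀ * B * P)⁻¹ * Pᵀ * Bᵀ := by
  simp only [orthProj, transpose_mul, Matrix.mul_assoc]

theorem transpose_mul_self_inv_mul_eq {m p τ : Type*} [Fintype m] [Fintype p] [Fintype τ]
    [DecidableEq m] {G Gh : Matrix m m ℝ} (hGhsq : Gh * Gh = G) (hGhT : Ghᵀ = Gh)
    (A : Matrix p m ℝ) (S : Matrix p τ ℝ) :
    (Gh⁻¹ * Aᵀ * S)ᵀ * (Gh⁻¹ * Aᵀ * S) = Sᵀ * A * G⁻¹ * Aᵀ * S := by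
  rw [← hGhsq, Matrix.mul_inv_rev]
  simp only [transpose_mul, transpose_transpose, transpose_nonsing_inv, hGhT, Matrix.mul_assoc]

theorem orthProj_inv_mul_eq_conj {m p τ : Type*} [Fintype m] [Fintype p] [Fintype τ]
    [DecidableEq m] [DecidableEq τ] {G Gh : Matrix m m ℝ} (hGhsq : Gh * Gh = G)
    (hGhT : Ghᵀ = Gh) (hGh : IsUnit Gh.det) (A : Matrix p m ℝ) (S : Matrix p τ ℝ) :
    orthProj (Gh⁻¹ * Aᵀ * S)
      = Gh * (G⁻¹ * Aᵀ * S * (Sᵀ * A * G⁻¹ * Aᵀ * S)⁻¹ * Sᵀ * A) * Gh⁻¹ := by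
  rw [orthProj, transpose_mul_self_inv_mul_eq hGhsq hGhT, ← hGhsq, Matrix.mul_inv_rev]
  simp only [transpose_mul, transpose_transpose, transpose_nonsing_inv, hGhT, Matrix.mul_assoc,
    mul_nonsing_inv_cancel_left _ _ hGh]

theorem stmt_19_general {m n p q r : ℕ} (τ₁ τ₂ : Fin r → ℕ)
    (G : Matrix (Fin m) (Fin m) ℝ)
    (Gh : Matrix (Fin m) (Fin m) ℝ) (hGh : Gh.PosDef) (hGhsq : Gh * Gh = G)
    (A : Matrix (Fin p) (Fin m) ℝ) (B : Matrix (Fin n) (Fin q) ℝ)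
    (S : ∀ k : Fin r, Matrix (Fin p) (Fin (τ₁ k)) ℝ)
    (P : ∀ k : Fin r, Matrix (Fin q) (Fin (τ₂ k)) ℝ)
    (hS : ∀ k, IsUnit ((S k)ᵀ * A * G⁻¹ * Aᵀ * S k).det)
    (hP : ∀ k, IsUnit ((P k)ᵀ * Bᵀ * B * P k).det)
    (w : Fin r → ℝ) (hw : ∀ k, 0 ≤ w k) (hw1 : ∑ k, w k = 1)
    (Xs X : Matrix (Fin m) (Fin n) ℝ) :
    let Z1 : Fin r → Matrix (Fin m) (Fin m) ℝ := fun k =>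
      G⁻¹ * Aᵀ * S k * ((S k)ᵀ * A * G⁻¹ * Aᵀ * S k)⁻¹ * (S k)ᵀ * A
    let Zh1 : Fin r → Matrix (Fin m) (Fin m) ℝ := fun k => Gh * Z1 k * Gh⁻¹
    let Z2 : Fin r → Matrix (Fin n) (Fin n) ℝ := fun k =>
      B * P k * ((P k)ᵀ * Bᵀ * B * P k)⁻¹ * (P k)ᵀ * Bᵀ
    let Xp : Fin r → Matrix (Fin m) (Fin n) ℝ := fun k =>
      X - Z1 k * (X - Xs) * Z2 k
    ∀ (hM : (∑ k, w k • (Z2 k ⊗ₖ Zh1 k)).IsHermitian),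
      normFG G (∑ k, w k • (Xp k - Xs))
        ≤ (1 - ⨅ i, hM.eigenvalues i) * normFG G (X - Xs) := by
  intro Z1 Zh1 Z2 Xp hM
  have hGhT : Ghᵀ = Gh := (by simpa using hGh.isHermitian : Gh.IsSymm).eq
  have hGhU : IsUnit Gh.det := (isUnit_iff_isUnit_det Gh).1 hGh.isUnit
  have hZh1 : ∀ k, Zh1 k = orthProj (Gh⁻¹ * Aᵀ * S k) := fun k =>
    (orthProj_inv_mul_eq_conj hGhsq hGhT hGhU A (S k)).symm
  have hZ2 : ∀ k, Z2 k = orthProj (B * P k) := fun k => (orthProj_mul_eq B (P k)).symm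
  have hproj : ∀ k, IsStarProjection (Z2 k ⊗ₖ Zh1 k) := fun k => by
    rw [hZ2, hZh1]
    refine (isStarProjection_orthProj _ ?_).kronecker (isStarProjection_orthProj _ ?_)
    · simpa only [transpose_mul, Matrix.mul_assoc] using hP k
    · rw [transpose_mul_self_inv_mul_eq hGhsq hGhT]
      exact hS k
  have hM1 : ∑ k, w k • (Z2 k ⊗ₖ Zh1 k) ≤ 1 :=
    Set.mem_Iic.1 <| (convex_Iic 1).sum_mem (fun k _ => hw k) hw1 fun k _ => (hproj k).le_one
  rw [normFG_eq_norm_vec hGhsq hGhT, normFG_eq_norm_vec hGhsq hGhT,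
    vec_mul_sum_smul_sub_eq_mulVec hGhU _ hw1 Z1 (fun k => by rw [hZ2, transpose_orthProj])]
  exact hM.norm_one_sub_mulVec_le hM1 _

/-- one-step contraction for the norm of the expected error:
`‖E[X⁺ − X*]‖_{F(G)} ≤ ρ ‖X − X*‖_{F(G)}` with
`ρ = 1 − λ_min(E[Z₂ ⊗ Ẑ₁])`. -/
theorem stmt_19 {m n p q r : ℕ} (τ₁ τ₂ : Fin r → ℕ)
    (G : Matrix (Fin m) (Fin m) ℝ) (hG : G.PosDef)
    (Gh : Matrix (Fin m) (Fin m) ℝ) (hGh : Gh.PosDef) (hGhsq : Gh * Gh = G)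
    (A : Matrix (Fin p) (Fin m) ℝ) (B : Matrix (Fin n) (Fin q) ℝ)
    (S : ∀ k : Fin r, Matrix (Fin p) (Fin (τ₁ k)) ℝ)
    (P : ∀ k : Fin r, Matrix (Fin q) (Fin (τ₂ k)) ℝ)
    (hS : ∀ k, IsUnit ((S k)ᵀ * A * G⁻¹ * Aᵀ * S k).det)
    (hP : ∀ k, IsUnit ((P k)ᵀ * Bᵀ * B * P k).det)
    (w : Fin r → ℝ) (hw : ∀ k, 0 ≤ w k) (hw1 : ∑ k, w k = 1)
    (Xs X : Matrix (Fin m) (Fin n) ℝ) :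
    let Z1 : Fin r → Matrix (Fin m) (Fin m) ℝ := fun k =>
      G⁻¹ * Aᵀ * S k * ((S k)ᵀ * A * G⁻¹ * Aᵀ * S k)⁻¹ * (S k)ᵀ * A
    let Zh1 : Fin r → Matrix (Fin m) (Fin m) ℝ := fun k => Gh * Z1 k * Gh⁻¹
    let Z2 : Fin r → Matrix (Fin n) (Fin n) ℝ := fun k =>
      B * P k * ((P k)ᵀ * Bᵀ * B * P k)⁻¹ * (P k)ᵀ * Bᵀ
    let Xp : Fin r → Matrix (Fin m) (Fin n) ℝ := fun k =>
      X - Z1 k * (X - Xs) * Z2 k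
    ∀ (hM : (∑ k, w k • (Z2 k ⊗ₖ Zh1 k)).IsHermitian),
      normFG G (∑ k, w k • (Xp k - Xs))
        ≤ (1 - ⨅ i, hM.eigenvalues i) * normFG G (X - Xs) :=
  stmt_19_general τ₁ τ₂ G Gh hGh hGhsq A B S P hS hP w hw hw1 Xs X
end
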